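/- arXiv:2102.00698 — 2 statements merged into one kernel-verified Lean document; each statement's English description precedes it below -/
import Mathlib

section
/- For every λ > 0 and every b ∈ ℝ^V there exists a unique g ∈ ℝ^V such that b ∈ {g + λh : h ∈ 𝓛(g)}; moreover this g is the unique minimizer over ℝ^V of the function g ↦ ‖b − g‖²/(2λ) + Q(D⁻¹g). -/
open scoped BigOperators

noncomputable section

namespace HypRicci

variable {V : Type*} [Fintype V] [DecidableEq V]

/-- A finite weighted hypergraph on vertex set `V`: a finite set of nonempty
hyperedges together with positive weights. -/
structure Hypergraph (V : Type*) [Fintype V] [DecidableEq V] : Type _ where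
  E : Finset (Finset V)
  w : Finset V → ℝ
  w_pos : ∀ e ∈ E, 0 < w e
  e_nonempty : ∀ e ∈ E, e.Nonempty

/-- Degree `d_x = ∑_{e ∋ x} w(e)`. -/
def deg (H : Hypergraph V) (x : V) : ℝ := ∑ e ∈ H.E, if x ∈ e then H.w e else 0

/-- Volume `vol(V) = ∑_x d_x`. -/
def vol (H : Hypergraph V) : ℝ := ∑ x, deg H x

/-- Weighted inner product `⟨f,g⟩ = ∑_x f(x) g(x) / d_x`. -/
def inn (H : Hypergraph V) (f g : V → ℝ) : ℝ := ∑ x, f x * g x / deg H x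

/-- Norm associated to `inn`. -/
def nrm (H : Hypergraph V) (f : V → ℝ) : ℝ := Real.sqrt (inn H f f)

/-- Indicator function `δ_x`. -/
def delta (x : V) : V → ℝ := fun z => if z = x then 1 else 0

/-- Standard (unweighted) dot product `u^⊤ v`. -/
def dot (u v : V → ℝ) : ℝ := ∑ x, u x * v x

/-- Base polytope `B_e = conv{δ_x − δ_y : x,y ∈ e}`. -/
def Bp (e : Finset V) : Set (V → ℝ) :=
  convexHull ℝ {b : V → ℝ | ∃ x ∈ e, ∃ y ∈ e, b = delta x - delta y}

/-- The multivalued hypergraph Laplacian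
`L(f) = {∑_e w(e) (b_e^⊤ f) b_e : b_e ∈ argmax_{b ∈ B_e} b^⊤ f}`. -/
def Lap (H : Hypergraph V) (f : V → ℝ) : Set (V → ℝ) :=
  { g | ∃ b : Finset V → (V → ℝ),
      (∀ e ∈ H.E, b e ∈ Bp e ∧ ∀ b' ∈ Bp e, dot b' f ≤ dot (b e) f) ∧
      g = ∑ e ∈ H.E, (H.w e * dot (b e) f) • b e }

/-- `D⁻¹ f`. -/
def Dinv (H : Hypergraph V) (f : V → ℝ) : V → ℝ := fun x => f x / deg H x

/-- Normalized Laplacian `𝓛(f) = L(D⁻¹ f)`. -/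
def NL (H : Hypergraph V) (f : V → ℝ) : Set (V → ℝ) := Lap H (Dinv H f)

/-- The resolvent `J_λ = (I + λ𝓛)⁻¹`: it sends `f` to the (unique) `g` with
`f ∈ g + λ 𝓛(g)`. -/
def Resolvent (H : Hypergraph V) (l : ℝ) (f : V → ℝ) : V → ℝ :=
  Classical.epsilon fun g => ∃ h ∈ NL H g, f = g + l • h

/-- Adjacency: `x ∼ y` iff some hyperedge contains both. -/
def Adj (H : Hypergraph V) (x y : V) : Prop := ∃ e ∈ H.E, x ∈ e ∧ y ∈ e

/-- There is a chain of length `n` of successively adjacent vertices from `x` to `y`. -/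
def chainProp (H : Hypergraph V) (x y : V) (n : ℕ) : Prop :=
  ∃ z : ℕ → V, z 0 = x ∧ z n = y ∧ ∀ i < n, Adj H (z i) (z (i + 1))

/-- Connectedness of the hypergraph. -/
def Connected (H : Hypergraph V) : Prop := ∀ x y : V, ∃ n, chainProp H x y n

/-- Graph distance (as a natural number). -/
def hdistN (H : Hypergraph V) (x y : V) : ℕ := sInf {n | chainProp H x y n}

/-- Graph distance `d(x,y)` as a real number. -/
def gdist (H : Hypergraph V) (x y : V) : ℝ := (hdistN H x y : ℝ)

/-- Diameter `diam(H) = max_{x,y} d(x,y)`. -/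
def hdiam (H : Hypergraph V) : ℝ :=
  (((Finset.univ : Finset (V × V)).sup fun p => hdistN H p.1 p.2 : ℕ) : ℝ)

/-- Weighted `1`-Lipschitz functions: `⟨f, δ_x − δ_y⟩ ≤ d(x,y)` for all `x, y`. -/
def Lip1 (H : Hypergraph V) : Set (V → ℝ) :=
  { f | ∀ x y : V, inn H f (delta x - delta y) ≤ gdist H x y }

/-- The `λ`-nonlinear Kantorovich difference. -/
def KD (H : Hypergraph V) (l : ℝ) (x y : V) : ℝ :=
  sSup { r | ∃ f ∈ Lip1 H, r = inn H (Resolvent H l f) (delta x - delta y) }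

/-- `κ_λ(x,y) = 1 − KD_λ(x,y)/d(x,y)`. -/
def kappa (H : Hypergraph V) (l : ℝ) (x y : V) : ℝ := 1 - KD H l x y / gdist H x y

/-- Lower coarse Ricci curvature `κ̲(x,y) = liminf_{λ↓0} κ_λ(x,y)/λ`. -/
def kappaLower (H : Hypergraph V) (x y : V) : EReal :=
  Filter.liminf (fun l : ℝ => ((kappa H l x y / l : ℝ) : EReal)) (nhdsWithin 0 (Set.Ioi 0))

/-- Upper coarse Ricci curvature `κ̄(x,y) = limsup_{λ↓0} κ_λ(x,y)/λ`. -/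
def kappaUpper (H : Hypergraph V) (x y : V) : EReal :=
  Filter.limsup (fun l : ℝ => ((kappa H l x y / l : ℝ) : EReal)) (nhdsWithin 0 (Set.Ioi 0))

/-- Canonical restriction `𝓛⁰ f`: the unique element of minimal norm of `𝓛(f)`. -/
def L0 (H : Hypergraph V) (f : V → ℝ) : V → ℝ :=
  Classical.epsilon fun g => g ∈ NL H f ∧ ∀ h ∈ NL H f, nrm H g ≤ nrm H h

/-- The stationary distribution `π(x) = d_x / vol(V)`. -/
def piH (H : Hypergraph V) : V → ℝ := fun x => deg H x / vol H

/-- The energy `Q(h) = (1/2) ∑_e w(e) max_{x,y ∈ e} (h(x) − h(y))²`. -/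
def Qform (H : Hypergraph V) (h : V → ℝ) : ℝ :=
  (1 / 2) * ∑ e ∈ H.E, H.w e * sSup { r | ∃ x ∈ e, ∃ y ∈ e, r = (h x - h y) ^ 2 }


/-!
The objective `F(g) = ‖b - g‖² / (2λ) + Q(D⁻¹g)` is continuous and coercive, so it has a
minimiser. Each `h ∈ 𝓛(g)` is a subgradient of `Q ∘ D⁻¹` at `g` for the weighted inner product,
so `b = g + λh` forces `F(g') - F(g) ≥ ‖g' - g‖² / (2λ)`: such a `g` is the strict minimiser, which
also gives uniqueness. Conversely, at a minimiser, `(b - g)/λ` lies in the compact convex set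
`𝓛(g)`: otherwise a linear functional `v` separating it from `𝓛(g)`, combined with Danskin's
bound on the one-sided derivative of each `max_{x,y ∈ e} (f x - f y)`, makes `F` strictly
decrease along `D v`.
-/

open Filter Topology

theorem exists_lt_of_eventually_le_sub_mul_add_sq {φ : ℝ → ℝ} {a ε C : ℝ} (hε : 0 < ε)
    (h : ∀ᶠ t in 𝓝[>] (0 : ℝ), φ t ≤ a - t * ε + t ^ 2 * C) : ∃ t, φ t < a := by
  have hsmall : ∀ᶠ t in 𝓝[>] (0 : ℝ), t * C < ε :=
    nhdsWithin_le_nhds <| ContinuousAt.eventually_lt (by fun_prop) (by fun_prop) (by simpa using hε)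
  obtain ⟨t, hφ, htC, ht⟩ := (h.and (hsmall.and self_mem_nhdsWithin)).exists
  exact ⟨t, by nlinarith [mul_lt_mul_of_pos_left htC (show (0 : ℝ) < t from ht)]⟩

section Spread

omit [Fintype V] [DecidableEq V]

def spread (e : Finset V) (h : V → ℝ) : ℝ := sSup {r | ∃ x ∈ e, ∃ y ∈ e, r = h x - h y}

variable {e : Finset V}

theorem spread_eq_sup' (he : e.Nonempty) (h : V → ℝ) :
    spread e h = (e ×ˢ e).sup' (he.product he) fun p => h p.1 - h p.2 := by
  rw [Finset.sup'_eq_csSup_image, spread]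
  congr 1
  ext r
  simp [eq_comm, and_assoc]

theorem sub_le_spread {x y : V} (hx : x ∈ e) (hy : y ∈ e) (h : V → ℝ) :
    h x - h y ≤ spread e h := by
  rw [spread_eq_sup' ⟨x, hx⟩]
  exact Finset.le_sup' (fun p : V × V => h p.1 - h p.2) (Finset.mk_mem_product hx hy)

theorem spread_nonneg (he : e.Nonempty) (h : V → ℝ) : 0 ≤ spread e h := by
  obtain ⟨x, hx⟩ := he
  simpa using sub_le_spread hx hx h

theorem exists_sub_eq_spread (he : e.Nonempty) (h : V → ℝ) :
    ∃ x ∈ e, ∃ y ∈ e, h x - h y = spread e h := by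
  obtain ⟨p, hp, hmax⟩ := Finset.exists_mem_eq_sup' (he.product he) fun p => h p.1 - h p.2
  rw [Finset.mem_product] at hp
  exact ⟨p.1, hp.1, p.2, hp.2, by rw [spread_eq_sup' he, hmax]⟩

theorem sSup_sq_sub_eq_spread_sq (he : e.Nonempty) (h : V → ℝ) :
    sSup {r | ∃ x ∈ e, ∃ y ∈ e, r = (h x - h y) ^ 2} = spread e h ^ 2 := by
  refine IsGreatest.csSup_eq ⟨?_, ?_⟩
  · obtain ⟨x, hx, y, hy, hxy⟩ := exists_sub_eq_spread he h
    exact ⟨x, hx, y, hy, by rw [hxy]⟩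
  · rintro _ ⟨x, hx, y, hy, rfl⟩
    have hyx := sub_le_spread hy hx h
    exact sq_le_sq' (by linarith) (sub_le_spread hx hy h)

theorem continuous_spread (he : e.Nonempty) : Continuous (spread e) := by
  rw [show spread e = _ from funext (spread_eq_sup' he)]
  exact Continuous.finset_sup'_apply _ fun p _ => by fun_prop

-- Danskin: for small `t > 0` only the pairs realising the spread compete for the maximum.
theorem eventually_spread_add_smul_le (he : e.Nonempty) {f v : V → ℝ} {m : ℝ}
    (hm : ∀ x ∈ e, ∀ y ∈ e, f x - f y = spread e f → v x - v y ≤ m) :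
    ∀ᶠ t in 𝓝[>] (0 : ℝ), spread e (f + t • v) ≤ spread e f + t * m := by
  have hpair : ∀ p ∈ e ×ˢ e, ∀ᶠ t in 𝓝[>] (0 : ℝ),
      f p.1 - f p.2 + t * (v p.1 - v p.2) ≤ spread e f + t * m := by
    rintro ⟨x, y⟩ hp
    rw [Finset.mem_product] at hp
    rcases (sub_le_spread hp.1 hp.2 f).eq_or_lt with heq | hlt
    · filter_upwards [self_mem_nhdsWithin] with t (ht : 0 < t)
      rw [heq]
      gcongr
      exact hm x hp.1 y hp.2 heq
    · have hev : ∀ᶠ t in 𝓝 (0 : ℝ), f x - f y + t * (v x - v y) < spread e f + t * m :=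
        ContinuousAt.eventually_lt (by fun_prop) (by fun_prop) (by simpa using hlt)
      exact (hev.filter_mono nhdsWithin_le_nhds).mono fun _ => le_of_lt
  filter_upwards [(eventually_all_finset _).2 hpair] with t ht
  rw [spread_eq_sup' he]
  exact Finset.sup'_le _ _ fun p hp => by simpa [mul_sub, add_sub_add_comm] using ht p hp

end Spread

section Dot

omit [DecidableEq V]

theorem dot_eq_dotProduct (u v : V → ℝ) : dot u v = u ⬝ᵥ v := rfl

theorem isLinearMap_dot_left (f : V → ℝ) : IsLinearMap ℝ fun c : V → ℝ => dot c f :=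
  ⟨fun _ _ => add_dotProduct _ _ _, fun _ _ => smul_dotProduct _ _ _⟩

theorem continuous_dot_left (f : V → ℝ) : Continuous fun c : V → ℝ => dot c f := by
  unfold dot; fun_prop

end Dot

section Face

theorem dot_delta_sub (x y : V) (f : V → ℝ) : dot (delta x - delta y) f = f x - f y := by
  simp [dot, delta, sub_mul, Finset.sum_sub_distrib]

omit [Fintype V] in
theorem delta_sub_mem_Bp {e : Finset V} {x y : V} (hx : x ∈ e) (hy : y ∈ e) :
    delta x - delta y ∈ Bp e :=
  subset_convexHull ℝ _ ⟨x, hx, y, hy, rfl⟩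

omit [Fintype V] in
theorem isCompact_Bp (e : Finset V) : IsCompact (Bp e) :=
  have hfin : {b : V → ℝ | ∃ x ∈ e, ∃ y ∈ e, b = delta x - delta y}.Finite :=
    ((e ×ˢ e).finite_toSet.image fun p => delta p.1 - delta p.2).subset
      (by rintro _ ⟨x, hx, y, hy, rfl⟩; exact ⟨(x, y), by simp [hx, hy], rfl⟩)
  hfin.isCompact_convexHull ℝ

theorem dot_le_spread {e : Finset V} {c : V → ℝ} (hc : c ∈ Bp e) (f : V → ℝ) :
    dot c f ≤ spread e f := by
  refine convexHull_min ?_ (convex_halfSpace_le (isLinearMap_dot_left f) _) hc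
  rintro _ ⟨x, hx, y, hy, rfl⟩
  show dot _ f ≤ _
  rw [dot_delta_sub]
  exact sub_le_spread hx hy f

def face (e : Finset V) (f : V → ℝ) : Set (V → ℝ) := {c | c ∈ Bp e ∧ dot c f = spread e f}

theorem isMaxOn_dot_iff_mem_face {e : Finset V} (he : e.Nonempty) {c f : V → ℝ} :
    (c ∈ Bp e ∧ ∀ c' ∈ Bp e, dot c' f ≤ dot c f) ↔ c ∈ face e f := by
  refine ⟨fun ⟨hc, hmax⟩ => ⟨hc, (dot_le_spread hc f).antisymm ?_⟩,
    fun ⟨hc, hcf⟩ => ⟨hc, fun c' hc' => hcf ▸ dot_le_spread hc' f⟩⟩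
  obtain ⟨x, hx, y, hy, hxy⟩ := exists_sub_eq_spread he f
  simpa [← hxy, dot_delta_sub] using hmax _ (delta_sub_mem_Bp hx hy)

theorem exists_mem_face_forall_sub_le_dot {e : Finset V} (he : e.Nonempty) (f v : V → ℝ) :
    ∃ c ∈ face e f, ∀ x ∈ e, ∀ y ∈ e, f x - f y = spread e f → v x - v y ≤ dot c v := by
  obtain ⟨x₀, hx₀, y₀, hy₀, h₀⟩ := exists_sub_eq_spread he f
  obtain ⟨p, hp, hmax⟩ := Finset.exists_max_image
    ((e ×ˢ e).filter fun p => f p.1 - f p.2 = spread e f) (fun p => v p.1 - v p.2)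
    ⟨(x₀, y₀), by simp [hx₀, hy₀, h₀]⟩
  simp only [Finset.mem_filter, Finset.mem_product] at hp
  refine ⟨delta p.1 - delta p.2, ⟨delta_sub_mem_Bp hp.1.1 hp.1.2, by rw [dot_delta_sub, hp.2]⟩,
    fun x hx y hy hxy => ?_⟩
  rw [dot_delta_sub]
  exact hmax (x, y) (by simp [hx, hy, hxy])

theorem apply_eq_dot_apply_delta (L : (V → ℝ) →L[ℝ] ℝ) (u : V → ℝ) :
    L u = dot u fun x => L (delta x) := by
  rw [show L u = L.toLinearMap u from rfl, LinearMap.pi_apply_eq_sum_univ]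
  refine Finset.sum_congr rfl fun x _ => ?_
  simp only [smul_eq_mul, eq_comm (a := x), ContinuousLinearMap.coe_coe]
  rfl

theorem convex_face (e : Finset V) (f : V → ℝ) : Convex ℝ (face e f) :=
  (convex_convexHull ℝ _).inter (convex_hyperplane (isLinearMap_dot_left f) _)

theorem isCompact_face (e : Finset V) (f : V → ℝ) : IsCompact (face e f) :=
  (isCompact_Bp e).inter_right (isClosed_eq (continuous_dot_left f) continuous_const)

end Face

section Laplacian

variable {H : Hypergraph V}

theorem Qform_eq_sum_spread (H : Hypergraph V) (h : V → ℝ) :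
    Qform H h = 1 / 2 * ∑ e ∈ H.E, H.w e * spread e h ^ 2 := by
  unfold Qform
  congr 1
  exact Finset.sum_congr rfl fun e he => by rw [sSup_sq_sub_eq_spread_sq (H.e_nonempty e he)]

theorem Qform_nonneg (H : Hypergraph V) (h : V → ℝ) : 0 ≤ Qform H h := by
  rw [Qform_eq_sum_spread]
  exact mul_nonneg (by norm_num) (Finset.sum_nonneg fun e he =>
    mul_nonneg (H.w_pos e he).le (sq_nonneg _))

theorem continuous_Qform (H : Hypergraph V) : Continuous (Qform H) := by
  rw [show Qform H = _ from funext (Qform_eq_sum_spread H)]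
  exact continuous_const.mul (continuous_finsetSum _ fun e he =>
    continuous_const.mul ((continuous_spread (H.e_nonempty e he)).pow 2))

theorem mem_Lap_iff {f s : V → ℝ} :
    s ∈ Lap H f ↔ ∃ c : Finset V → V → ℝ, (∀ e ∈ H.E, c e ∈ face e f) ∧
      s = ∑ e ∈ H.E, (H.w e * spread e f) • c e := by
  refine ⟨fun ⟨c, hc, hs⟩ => ⟨c, fun e he => ?_, ?_⟩, fun ⟨c, hc, hs⟩ => ⟨c, fun e he => ?_, ?_⟩⟩
  · exact (isMaxOn_dot_iff_mem_face (H.e_nonempty e he)).1 (hc e he)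
  · rw [hs]
    refine Finset.sum_congr rfl fun e he => ?_
    rw [((isMaxOn_dot_iff_mem_face (H.e_nonempty e he)).1 (hc e he)).2]
  · exact (isMaxOn_dot_iff_mem_face (H.e_nonempty e he)).2 (hc e he)
  · rw [hs]
    refine Finset.sum_congr rfl fun e he => ?_
    rw [(hc e he).2]

theorem Lap_eq_image (H : Hypergraph V) (f : V → ℝ) :
    Lap H f = (fun c : H.E → V → ℝ => ∑ e : H.E, (H.w e * spread e f) • c e) ''
      Set.univ.pi fun e : H.E => face e f := by
  ext s
  rw [mem_Lap_iff]
  constructor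
  · rintro ⟨c, hc, rfl⟩
    exact ⟨fun e : H.E => c e, fun e _ => hc e e.2,
      Finset.sum_coe_sort H.E fun e => (H.w e * spread e f) • c e⟩
  · rintro ⟨c, hc, rfl⟩
    refine ⟨fun e => if he : e ∈ H.E then c ⟨e, he⟩ else 0,
      fun e he => by simpa [he] using hc ⟨e, he⟩ trivial, ?_⟩
    rw [← Finset.sum_coe_sort H.E]
    exact Finset.sum_congr rfl fun e _ => by simp

theorem convex_Lap (H : Hypergraph V) (f : V → ℝ) : Convex ℝ (Lap H f) := by
  rw [Lap_eq_image]
  refine (convex_pi fun (e : H.E) _ => convex_face e f).is_linear_image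
    ⟨fun c c' => ?_, fun r c => ?_⟩
  · simp only [Pi.add_apply, smul_add, Finset.sum_add_distrib]
  · simp only [Pi.smul_apply, Finset.smul_sum, smul_comm r]

theorem isCompact_Lap (H : Hypergraph V) (f : V → ℝ) : IsCompact (Lap H f) := by
  rw [Lap_eq_image]
  have hpi : IsCompact (Set.univ.pi fun e : H.E => face e f) :=
    isCompact_univ_pi fun e => isCompact_face _ f
  exact hpi.image (continuous_finsetSum _ fun e _ => by fun_prop)

theorem dot_sub_le_Qform_sub {f s : V → ℝ} (hs : s ∈ Lap H f) (f' : V → ℝ) :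
    dot s (f' - f) ≤ Qform H f' - Qform H f := by
  obtain ⟨c, hc, rfl⟩ := mem_Lap_iff.1 hs
  rw [Qform_eq_sum_spread, Qform_eq_sum_spread, ← mul_sub, ← Finset.sum_sub_distrib,
    Finset.mul_sum, dot_eq_dotProduct, sum_dotProduct]
  refine Finset.sum_le_sum fun e he => ?_
  have hw := (H.w_pos e he).le
  have hM := spread_nonneg (H.e_nonempty e he) f
  have hcf' := dot_le_spread (hc e he).1 f'
  rw [smul_dotProduct, dotProduct_sub, ← dot_eq_dotProduct, ← dot_eq_dotProduct, (hc e he).2,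
    smul_eq_mul]
  nlinarith [mul_le_mul_of_nonneg_left hcf' (mul_nonneg hw hM),
    mul_nonneg hw (sq_nonneg (spread e f' - spread e f))]

theorem eventually_Qform_add_smul_le {f v : V → ℝ} {m : Finset V → ℝ}
    (hm : ∀ e ∈ H.E, ∀ x ∈ e, ∀ y ∈ e, f x - f y = spread e f → v x - v y ≤ m e) :
    ∀ᶠ t in 𝓝[>] (0 : ℝ), Qform H (f + t • v) ≤ Qform H f +
      t * ∑ e ∈ H.E, H.w e * spread e f * m e + t ^ 2 * ∑ e ∈ H.E, H.w e * m e ^ 2 / 2 := by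
  filter_upwards [(eventually_all_finset H.E).2 fun e he =>
    eventually_spread_add_smul_le (H.e_nonempty e he) (hm e he)] with t ht
  simp only [Qform_eq_sum_spread, Finset.mul_sum, ← Finset.sum_add_distrib]
  refine Finset.sum_le_sum fun e he => ?_
  have hsq := pow_le_pow_left₀ (spread_nonneg (H.e_nonempty e he) _) (ht e he) 2
  nlinarith [mul_le_mul_of_nonneg_left hsq (H.w_pos e he).le]

end Laplacian

section WeightedInner

variable {H : Hypergraph V}

theorem inn_smul_left (r : ℝ) (u w : V → ℝ) : inn H (r • u) w = r * inn H u w := by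
  simp only [inn, Finset.mul_sum, Pi.smul_apply, smul_eq_mul, mul_assoc, mul_div_assoc]

theorem inn_smul_right (r : ℝ) (u w : V → ℝ) : inn H u (r • w) = r * inn H u w := by
  simp only [inn, Finset.mul_sum, Pi.smul_apply, smul_eq_mul, mul_div_assoc, mul_left_comm]

theorem inn_eq_dot_Dinv (u w : V → ℝ) : inn H u w = dot u (Dinv H w) :=
  Finset.sum_congr rfl fun _ _ => mul_div_assoc _ _ _

theorem Dinv_sub (u w : V → ℝ) : Dinv H (u - w) = Dinv H u - Dinv H w :=
  funext fun _ => sub_div _ _ _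

variable (hdeg : ∀ x : V, 0 < deg H x)
include hdeg

theorem inn_self_nonneg (u : V → ℝ) : 0 ≤ inn H u u :=
  Finset.sum_nonneg fun x _ => div_nonneg (mul_self_nonneg _) (hdeg x).le

theorem inn_self_pos {u : V → ℝ} (hu : u ≠ 0) : 0 < inn H u u := by
  obtain ⟨x, hx⟩ := Function.ne_iff.1 hu
  exact Finset.sum_pos' (fun y _ => div_nonneg (mul_self_nonneg _) (hdeg y).le)
    ⟨x, Finset.mem_univ x, div_pos (mul_self_pos.2 hx) (hdeg x)⟩

theorem nrm_sq (u : V → ℝ) : nrm H u ^ 2 = inn H u u :=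
  Real.sq_sqrt (inn_self_nonneg hdeg u)

theorem nrm_sub_sq (u w : V → ℝ) :
    nrm H (u - w) ^ 2 = nrm H u ^ 2 - 2 * inn H u w + inn H w w := by
  simp only [nrm_sq hdeg, inn, Finset.mul_sum, ← Finset.sum_sub_distrib, ← Finset.sum_add_distrib]
  exact Finset.sum_congr rfl fun x _ => by simp only [Pi.sub_apply]; ring

theorem sq_le_deg_mul_inn (u : V → ℝ) (x : V) : u x ^ 2 ≤ deg H x * inn H u u := by
  have hx : u x * u x / deg H x ≤ inn H u u :=
    Finset.single_le_sum (f := fun y => u y * u y / deg H y)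
      (fun y _ => div_nonneg (mul_self_nonneg _) (hdeg y).le) (Finset.mem_univ x)
  rw [div_le_iff₀ (hdeg x)] at hx
  linarith

theorem Dinv_deg_mul (v : V → ℝ) : Dinv H (fun x => deg H x * v x) = v :=
  funext fun x => mul_div_cancel_left₀ _ (hdeg x).ne'

end WeightedInner

section ProxObjective

variable {H : Hypergraph V} {l : ℝ}

def proxObjective (H : Hypergraph V) (l : ℝ) (b g : V → ℝ) : ℝ :=
  nrm H (b - g) ^ 2 / (2 * l) + Qform H (Dinv H g)

theorem continuous_proxObjective (H : Hypergraph V) (l : ℝ) (b : V → ℝ) :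
    Continuous (proxObjective H l b) := by
  have hnrm : Continuous fun g : V → ℝ => nrm H (b - g) := by unfold nrm inn; fun_prop
  have hDinv : Continuous (Dinv H) := by unfold Dinv; fun_prop
  exact ((hnrm.pow 2).div_const _).add ((continuous_Qform H).comp hDinv)

variable (hdeg : ∀ x : V, 0 < deg H x)
include hdeg

theorem inn_le_proxObjective (hl : 0 < l) (b g : V → ℝ) :
    inn H (b - g) (b - g) ≤ 2 * l * proxObjective H l b g := by
  have hQ := Qform_nonneg H (Dinv H g)
  rw [proxObjective, mul_add, mul_div_cancel₀ _ (by positivity), nrm_sq hdeg]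
  nlinarith

theorem exists_forall_proxObjective_le (hl : 0 < l) (b : V → ℝ) :
    ∃ g, ∀ g', proxObjective H l b g ≤ proxObjective H l b g' := by
  set F := proxObjective H l b
  have hF := continuous_proxObjective H l b
  have hbdd : Bornology.IsBounded {g | F g ≤ F b} := by
    refine Bornology.forall_isBounded_image_eval_iff.1 fun x =>
      (Metric.isBounded_closedBall (x := b x) (r := √(deg H x * (2 * l * F b)))).subset ?_
    rintro _ ⟨g, hg, rfl⟩
    rw [Metric.mem_closedBall, Real.dist_eq, abs_sub_comm]
    refine Real.abs_le_sqrt ((sq_le_deg_mul_inn hdeg (b - g) x).trans ?_)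
    gcongr
    · exact (hdeg x).le
    · exact (inn_le_proxObjective hdeg hl b g).trans (by gcongr; exact hg)
  refine hF.exists_forall_le' b (mem_cocompact.2 ⟨_,
    Metric.isCompact_of_isClosed_isBounded (isClosed_le hF continuous_const) hbdd,
    fun g (hg : ¬F g ≤ F b) => (not_le.1 hg).le⟩)

theorem proxObjective_lt_of_mem_NL (hl : 0 < l) {b g h : V → ℝ} (hh : h ∈ NL H g)
    (hb : b = g + l • h) {g' : V → ℝ} (hne : g' ≠ g) :
    proxObjective H l b g < proxObjective H l b g' := by
  have hsub : inn H h (g' - g) ≤ Qform H (Dinv H g') - Qform H (Dinv H g) := by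
    rw [inn_eq_dot_Dinv, Dinv_sub]
    exact dot_sub_le_Qform_sub hh _
  have hpos : 0 < inn H (g' - g) (g' - g) / (2 * l) :=
    div_pos (inn_self_pos hdeg (sub_ne_zero.2 hne)) (by positivity)
  have hbg : b - g = l • h := by rw [hb]; abel
  have hbg' : b - g' = l • h - (g' - g) := by rw [hb]; abel
  have hexp : nrm H (b - g') ^ 2 / (2 * l) = nrm H (b - g) ^ 2 / (2 * l) - inn H h (g' - g) +
      inn H (g' - g) (g' - g) / (2 * l) := by
    rw [hbg', nrm_sub_sq hdeg, inn_smul_left, hbg]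
    field_simp
  unfold proxObjective
  linarith

theorem eventually_proxObjective_add_smul_le (b : V → ℝ) {g v : V → ℝ} {m : Finset V → ℝ}
    (hm : ∀ e ∈ H.E, ∀ x ∈ e, ∀ y ∈ e,
      Dinv H g x - Dinv H g y = spread e (Dinv H g) → v x - v y ≤ m e) :
    ∃ C, ∀ᶠ t in 𝓝[>] (0 : ℝ), proxObjective H l b (g + t • fun x => deg H x * v x) ≤
      proxObjective H l b g -
        t * (l⁻¹ * dot (b - g) v - ∑ e ∈ H.E, H.w e * spread e (Dinv H g) * m e) + t ^ 2 * C := by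
  set Dv : V → ℝ := fun x => deg H x * v x
  refine ⟨inn H Dv Dv / (2 * l) + ∑ e ∈ H.E, H.w e * m e ^ 2 / 2, ?_⟩
  filter_upwards [eventually_Qform_add_smul_le hm] with t hQ
  have hDinv : Dinv H (g + t • Dv) = Dinv H g + t • v := by
    funext x
    simp only [Dinv, Dv, Pi.add_apply, Pi.smul_apply, smul_eq_mul, add_div, mul_div_assoc,
      mul_div_cancel_left₀ _ (hdeg x).ne']
  have hnrm : nrm H (b - (g + t • Dv)) ^ 2 =
      nrm H (b - g) ^ 2 - 2 * t * dot (b - g) v + t ^ 2 * inn H Dv Dv := by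
    rw [← sub_sub, nrm_sub_sq hdeg, inn_smul_right, inn_smul_left, inn_smul_right,
      inn_eq_dot_Dinv (w := Dv), Dinv_deg_mul hdeg]
    ring
  unfold proxObjective
  rw [hnrm, hDinv]
  have hsplit : (nrm H (b - g) ^ 2 - 2 * t * dot (b - g) v + t ^ 2 * inn H Dv Dv) / (2 * l) =
      nrm H (b - g) ^ 2 / (2 * l) - t * (l⁻¹ * dot (b - g) v) +
        t ^ 2 * (inn H Dv Dv / (2 * l)) := by
    ring
  linarith

theorem exists_mem_NL_of_forall_proxObjective_le (hl : 0 < l) {b g : V → ℝ}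
    (hmin : ∀ g', proxObjective H l b g ≤ proxObjective H l b g') :
    ∃ h ∈ NL H g, b = g + l • h := by
  set f := Dinv H g
  suffices hp : l⁻¹ • (b - g) ∈ Lap H f from
    ⟨_, hp, by rw [smul_inv_smul₀ hl.ne']; abel⟩
  by_contra hp
  obtain ⟨L, u, hLs, hLp⟩ :=
    geometric_hahn_banach_closed_point (convex_Lap H f) (isCompact_Lap H f).isClosed hp
  set v : V → ℝ := fun x => L (delta x)
  choose! c hc hcv using fun e (he : e ∈ H.E) =>
    exists_mem_face_forall_sub_le_dot (H.e_nonempty e he) f v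
  have hgap : ∑ e ∈ H.E, H.w e * spread e f * dot (c e) v < l⁻¹ * dot (b - g) v := by
    have hsep := (hLs _ (mem_Lap_iff.2 ⟨c, hc, rfl⟩)).trans hLp
    rw [apply_eq_dot_apply_delta, apply_eq_dot_apply_delta] at hsep
    simpa only [dot_eq_dotProduct, sum_dotProduct, smul_dotProduct, smul_eq_mul] using hsep
  obtain ⟨C, hC⟩ := eventually_proxObjective_add_smul_le hdeg b hcv
  obtain ⟨t, ht⟩ := exists_lt_of_eventually_le_sub_mul_add_sq (sub_pos.2 hgap) hC
  exact absurd ht (not_lt.2 (hmin _))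

end ProxObjective

theorem stmt0_general (H : Hypergraph V)
    (hdeg : ∀ x : V, 0 < deg H x) (l : ℝ) (hl : 0 < l) (b : V → ℝ) :
    ∃ g : V → ℝ,
      (∃ h ∈ NL H g, b = g + l • h) ∧
      (∀ g' : V → ℝ, (∃ h ∈ NL H g', b = g' + l • h) → g' = g) ∧
      (∀ g' : V → ℝ, g' ≠ g →
        nrm H (b - g) ^ 2 / (2 * l) + Qform H (Dinv H g)
          < nrm H (b - g') ^ 2 / (2 * l) + Qform H (Dinv H g')) := by
  obtain ⟨g, hmin⟩ := exists_forall_proxObjective_le hdeg hl b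
  obtain ⟨h, hh, hb⟩ := exists_mem_NL_of_forall_proxObjective_le hdeg hl hmin
  refine ⟨g, ⟨h, hh, hb⟩, fun g' ⟨h', hh', hb'⟩ => ?_,
    fun g' hne => proxObjective_lt_of_mem_NL hdeg hl hh hb hne⟩
  by_contra hne
  exact absurd (proxObjective_lt_of_mem_NL hdeg hl hh' hb' (Ne.symm hne)) (not_lt.2 (hmin g'))

/-- For every `λ > 0` and `b ∈ ℝ^V` there is a unique `g` with
`b ∈ g + λ𝓛(g)`, and this `g` is the unique minimizer of
`g ↦ ‖b − g‖²/(2λ) + Q(D⁻¹g)`. -/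
theorem stmt0 [Nonempty V] (H : Hypergraph V) (hconn : Connected H)
    (hdeg : ∀ x : V, 0 < deg H x) (l : ℝ) (hl : 0 < l) (b : V → ℝ) :
    ∃ g : V → ℝ,
      (∃ h ∈ NL H g, b = g + l • h) ∧
      (∀ g' : V → ℝ, (∃ h ∈ NL H g', b = g' + l • h) → g' = g) ∧
      (∀ g' : V → ℝ, g' ≠ g →
        nrm H (b - g) ^ 2 / (2 * l) + Qform H (Dinv H g)
          < nrm H (b - g') ^ 2 / (2 * l) + Qform H (Dinv H g')) :=
  stmt0_general H hdeg l hl b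

end HypRicci
end
end

section
/- If f ∈ Lip_w^1(V), then every g ∈ 𝓛(f) satisfies |g(x)| ≤ d_x for all x ∈ V; consequently ‖g‖ ≤ vol(V)^{1/2} for every g ∈ 𝓛(f). -/
open scoped BigOperators

noncomputable section

/-!
Write `g = ∑ₑ w(e) (bₑᵀ h) bₑ` with `h = D⁻¹ f`. Each `bₑ` is a convex combination of vectors
`δ_x - δ_y` with `x, y ∈ e`, so `|bₑ(x)| ≤ 1` with `bₑ(x) = 0` off `e`, and `bₑᵀ h` lies between
`0` (attained by `0 ∈ Bₑ`) and `max_{x,y ∈ e} (h(x) - h(y)) ≤ 1`, since vertices of a common edge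
are at distance at most `1`. Summing over the edges through `x` gives `|g(x)| ≤ d_x`, and then
`‖g‖² = ∑ₓ g(x)² / d_x ≤ ∑ₓ d_x = vol(V)`.
-/

namespace HypRicci

section

variable {V : Type*} [DecidableEq V]

lemma zero_mem_Bp {e : Finset V} (he : e.Nonempty) : (0 : V → ℝ) ∈ Bp e := by
  obtain ⟨y, hy⟩ := he
  exact subset_convexHull ℝ _ ⟨y, hy, y, hy, (sub_self _).symm⟩

lemma abs_apply_le_of_mem_Bp {e : Finset V} {b : V → ℝ} (hb : b ∈ Bp e) (x : V) :
    |b x| ≤ if x ∈ e then 1 else 0 := by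
  set t : ℝ := if x ∈ e then 1 else 0
  suffices Bp e ⊆ LinearMap.proj (R := ℝ) (φ := fun _ : V => ℝ) x ⁻¹' Set.Icc (-t) t from
    abs_le.2 (this hb)
  refine convexHull_min ?_ ((convex_Icc _ _).linear_preimage _)
  rintro _ ⟨u, hu, v, hv, rfl⟩
  by_cases hx : x ∈ e
  · simp only [t, hx, if_true, Set.mem_preimage, LinearMap.coe_proj, Function.eval,
      Pi.sub_apply, delta, Set.mem_Icc]
    split_ifs <;> norm_num
  · have hxu : x ≠ u := fun h => hx (h ▸ hu)
    have hxv : x ≠ v := fun h => hx (h ▸ hv)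
    simp [t, delta, hx, hxu, hxv]

end

variable {V : Type*} [Fintype V] [DecidableEq V]

lemma deg_nonneg (H : Hypergraph V) (x : V) : 0 ≤ deg H x :=
  Finset.sum_nonneg fun e he => by split_ifs <;> simp [(H.w_pos e he).le]

lemma gdist_le_one_of_mem (H : Hypergraph V) {e : Finset V} (he : e ∈ H.E) {u v : V}
    (hu : u ∈ e) (hv : v ∈ e) : gdist H u v ≤ 1 := by
  have hchain : chainProp H u v 1 := by
    refine ⟨fun i => if i = 0 then u else v, by simp, by simp, fun i hi => ?_⟩
    obtain rfl : i = 0 := by omega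
    simpa using ⟨e, he, hu, hv⟩
  exact Nat.cast_le_one.2 (Nat.sInf_le hchain)

lemma dot_delta_sub_delta (u v : V) (h : V → ℝ) : dot (delta u - delta v) h = h u - h v := by
  simp [dot, delta, sub_mul, ite_mul, Finset.sum_sub_distrib]

lemma inn_delta_sub_delta (H : Hypergraph V) (f : V → ℝ) (u v : V) :
    inn H f (delta u - delta v) = Dinv H f u - Dinv H f v := by
  simp [inn, Dinv, delta, mul_sub, sub_div, Finset.sum_sub_distrib, mul_ite, ite_div]

lemma Dinv_sub_le_gdist_of_mem_Lip1 (H : Hypergraph V) {f : V → ℝ} (hf : f ∈ Lip1 H) (u v : V) :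
    Dinv H f u - Dinv H f v ≤ gdist H u v :=
  inn_delta_sub_delta H f u v ▸ hf u v

lemma dot_le_of_mem_Bp {e : Finset V} {h : V → ℝ} {c : ℝ}
    (hosc : ∀ u ∈ e, ∀ v ∈ e, h u - h v ≤ c) {b : V → ℝ} (hb : b ∈ Bp e) : dot b h ≤ c := by
  have hlin : IsLinearMap ℝ (fun b : V → ℝ => dot b h) :=
    ⟨fun p q => by simp [dot, add_mul, Finset.sum_add_distrib],
      fun a p => by simp [dot, Finset.mul_sum, mul_assoc]⟩
  refine convexHull_min ?_ (convex_halfSpace_le hlin c) hb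
  rintro _ ⟨u, hu, v, hv, rfl⟩
  exact (dot_delta_sub_delta u v h).trans_le (hosc u hu v hv)

lemma abs_smul_apply_le_of_mem_Bp {e : Finset V} {b h : V → ℝ} {w : ℝ} (hw : 0 ≤ w)
    (hb : b ∈ Bp e) (hdot₀ : 0 ≤ dot b h) (hdot₁ : dot b h ≤ 1) (x : V) :
    |((w * dot b h) • b) x| ≤ if x ∈ e then w else 0 := by
  rw [Pi.smul_apply, smul_eq_mul, abs_mul, abs_of_nonneg (mul_nonneg hw hdot₀)]
  calc w * dot b h * |b x| ≤ w * 1 * (if x ∈ e then 1 else 0) := by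
        gcongr
        exact abs_apply_le_of_mem_Bp hb x
    _ = if x ∈ e then w else 0 := by split_ifs <;> simp

lemma abs_apply_le_deg_of_mem_Lap (H : Hypergraph V) {h : V → ℝ}
    (hosc : ∀ e ∈ H.E, ∀ u ∈ e, ∀ v ∈ e, h u - h v ≤ 1) {g : V → ℝ} (hg : g ∈ Lap H h)
    (x : V) : |g x| ≤ deg H x := by
  obtain ⟨b, hb, rfl⟩ := hg
  rw [Finset.sum_apply]
  refine (Finset.abs_sum_le_sum_abs _ _).trans (Finset.sum_le_sum fun e he => ?_)
  have hdot₀ : 0 ≤ dot (b e) h := by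
    simpa [dot] using (hb e he).2 0 (zero_mem_Bp (H.e_nonempty e he))
  exact abs_smul_apply_le_of_mem_Bp (H.w_pos e he).le (hb e he).1 hdot₀
    (dot_le_of_mem_Bp (hosc e he) (hb e he).1) x

lemma abs_apply_le_deg_of_mem_NL (H : Hypergraph V) {f : V → ℝ} (hf : f ∈ Lip1 H)
    {g : V → ℝ} (hg : g ∈ NL H f) (x : V) : |g x| ≤ deg H x :=
  abs_apply_le_deg_of_mem_Lap H (fun _ he u hu v hv =>
    (Dinv_sub_le_gdist_of_mem_Lip1 H hf u v).trans (gdist_le_one_of_mem H he hu hv)) hg x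

lemma nrm_le_sqrt_vol (H : Hypergraph V) {g : V → ℝ} (hg : ∀ x, |g x| ≤ deg H x) :
    nrm H g ≤ Real.sqrt (vol H) := by
  refine Real.sqrt_le_sqrt (Finset.sum_le_sum fun x _ => ?_)
  refine div_le_of_le_mul₀ (deg_nonneg H x) (deg_nonneg H x) ?_
  rw [← abs_mul_abs_self (g x)]
  exact mul_le_mul (hg x) (hg x) (abs_nonneg _) (deg_nonneg H x)

theorem stmt6_general (H : Hypergraph V) (f : V → ℝ) (hf : f ∈ Lip1 H) :
    ∀ g ∈ NL H f, (∀ x : V, |g x| ≤ deg H x) ∧ nrm H g ≤ Real.sqrt (vol H) := by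
  intro g hg
  have hbound : ∀ x, |g x| ≤ deg H x := abs_apply_le_deg_of_mem_NL H hf hg
  exact ⟨hbound, nrm_le_sqrt_vol H hbound⟩

/-- for weighted 1-Lipschitz `f`, every `g ∈ 𝓛(f)` satisfies
`|g(x)| ≤ d_x` and `‖g‖ ≤ vol(V)^{1/2}`. -/
theorem stmt6 [Nonempty V] (H : Hypergraph V) (hconn : Connected H)
    (hdeg : ∀ x : V, 0 < deg H x) (f : V → ℝ) (hf : f ∈ Lip1 H) :
    ∀ g ∈ NL H f, (∀ x : V, |g x| ≤ deg H x) ∧ nrm H g ≤ Real.sqrt (vol H) :=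
  stmt6_general H f hf

end HypRicci
end
end
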